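/- Let Y and W be pointed metric spaces and T : Y → W Lipschitz with T(0) = 0. Then T is MS-Lipschitz p-summing if and only if the Lipschitz adjoint T^# : W^# → Y^#, defined by T^#(f) = f ∘ T, is (Cohen) strongly p*-summing, where 1/p + 1/p* = 1. -/

import Mathlib

/-!
Both sides are bounds for the pairing `⟨x ⊗ f⟩ = T^# f (x)` on `F(Y) ⊗ W^#`. Strong
`p*`-summability of `T^#` bounds `∑ |φ_j (T^# f_j)|` for `φ_j` in the bidual of `F(Y)`; testing
it on evaluations `φ_j = x_j ∈ F(Y)` bounds the pairing by the Chevet–Saphar norm `d_p`, which is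
the MS condition. Conversely, the MS condition gives that bound for families `x_j` in the dense
span of `δ(Y)`, and it has to be carried over to bidual families. For this, replace the
weak `ℓ_p` norm of `(x_j)` (a supremum over the unit ball of `ℓ_{p*}^m`), up to a factor
`1 - δ`, by `max_i ‖∑_j a_{ij} x_j‖` over a finite `δ`-net `(a_i)`. Hahn–Banach in
`ℓ_∞(F(Y))` then writes `T^# f_j = ∑_i a_{ij} h_i` with `∑_i ‖h_i‖` bounded, and bidual functionals
pair with this decomposition with the same bound; finally let `δ → 0`.
-/

open scoped TensorProduct
open NormedSpace Finset

noncomputable section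

/-- The strong `ℓ_p^m` norm of a finite family in a normed space. -/
def strongLp {E : Type*} [NormedAddCommGroup E] (p : ℝ) {m : ℕ} (x : Fin m → E) : ℝ :=
  (∑ j, ‖x j‖ ^ p) ^ (1 / p)

/-- The weak `ℓ_p^{m,w}` norm of a finite family in a normed space. -/
def weakLp {E : Type*} [NormedAddCommGroup E] [NormedSpace ℝ E] (p : ℝ) {m : ℕ}
    (x : Fin m → E) : ℝ :=
  sSup {r : ℝ | ∃ φ : StrongDual ℝ E, ‖φ‖ ≤ 1 ∧ r = (∑ j, |φ (x j)| ^ p) ^ (1 / p)}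

/-- A continuous linear operator is `p`-summing. -/
def IsPSumming {E F : Type*} [NormedAddCommGroup E] [NormedSpace ℝ E]
    [NormedAddCommGroup F] [NormedSpace ℝ F] (p : ℝ) (u : E →L[ℝ] F) : Prop :=
  ∃ K > 0, ∀ (m : ℕ) (x : Fin m → E),
    strongLp p (fun j => u (x j)) ≤ K * weakLp p x

/-- A continuous linear operator is (Cohen) strongly `p`-summing (`q` is the conjugate of `p`). -/
def IsStronglyPSumming {E F : Type*} [NormedAddCommGroup E] [NormedSpace ℝ E]
    [NormedAddCommGroup F] [NormedSpace ℝ F] (p q : ℝ) (u : E →L[ℝ] F) : Prop :=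
  ∃ K > 0, ∀ (m : ℕ) (x : Fin m → E) (φ : Fin m → StrongDual ℝ F),
    ∑ j, |φ j (u (x j))| ≤ K * strongLp p x * weakLp q φ

/-- A continuous linear operator is (Cohen) `p`-nuclear (`q` is the conjugate of `p`). -/
def IsPNuclear {E F : Type*} [NormedAddCommGroup E] [NormedSpace ℝ E]
    [NormedAddCommGroup F] [NormedSpace ℝ F] (p q : ℝ) (u : E →L[ℝ] F) : Prop :=
  ∃ K > 0, ∀ (m : ℕ) (x : Fin m → E) (φ : Fin m → StrongDual ℝ F),
    ∑ j, |φ j (u (x j))| ≤ K * weakLp p x * weakLp q φ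

/-- The Chevet–Saphar norm `d_p` on a tensor product (`q` is the conjugate of `p`):
infimum over all finite representations of `z`. -/
def dpNorm {E G : Type*} [NormedAddCommGroup E] [NormedSpace ℝ E]
    [NormedAddCommGroup G] [NormedSpace ℝ G] (p q : ℝ) (z : TensorProduct ℝ E G) : ℝ :=
  sInf {r : ℝ | ∃ (m : ℕ) (n : Fin m → E) (h : Fin m → G),
    z = ∑ j, n j ⊗ₜ[ℝ] h j ∧ r = weakLp p n * strongLp q h}

/-- The Chevet–Saphar norm `g_p` on a tensor product (`q` is the conjugate of `p`). -/
def gpNorm {E G : Type*} [NormedAddCommGroup E] [NormedSpace ℝ E]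
    [NormedAddCommGroup G] [NormedSpace ℝ G] (p q : ℝ) (z : TensorProduct ℝ E G) : ℝ :=
  sInf {r : ℝ | ∃ (m : ℕ) (n : Fin m → E) (h : Fin m → G),
    z = ∑ j, n j ⊗ₜ[ℝ] h j ∧ r = strongLp p n * weakLp q h}

/-- The tensor norm `w_p` (`q` is the conjugate of `p`). -/
def wpNorm {E G : Type*} [NormedAddCommGroup E] [NormedSpace ℝ E]
    [NormedAddCommGroup G] [NormedSpace ℝ G] (p q : ℝ) (z : TensorProduct ℝ E G) : ℝ :=
  sInf {r : ℝ | ∃ (m : ℕ) (n : Fin m → E) (h : Fin m → G),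
    z = ∑ j, n j ⊗ₜ[ℝ] h j ∧ r = weakLp p n * weakLp q h}

/-- `E`, together with the map `δ : Y → E`, is (isometrically) the Lipschitz-free space
of the pointed metric space `(Y, y₀)`: `δ` sends the base point to `0`, is an isometric
embedding, has dense linear span, and the norm of finite combinations of point evaluations
is computed against the unit ball of `Lip₀(Y)`. -/
structure IsFreeSpace (Y : Type*) [MetricSpace Y] (y₀ : Y)
    (E : Type*) [NormedAddCommGroup E] [NormedSpace ℝ E] [CompleteSpace E]
    (δ : Y → E) : Prop where
  map_base : δ y₀ = 0
  isometry : ∀ x y : Y, ‖δ x - δ y‖ = dist x y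
  dense_span : (Submodule.span ℝ (Set.range δ)).topologicalClosure = ⊤
  norm_eq : ∀ (n : ℕ) (a : Fin n → ℝ) (x : Fin n → Y),
    ‖∑ i, a i • δ (x i)‖ =
      sSup {r : ℝ | ∃ s : Y → ℝ, LipschitzWith 1 s ∧ s y₀ = 0 ∧ r = |∑ i, a i * s (x i)|}

end

noncomputable section

variable {Y W FY FW : Type*} [MetricSpace Y] [MetricSpace W]
  [NormedAddCommGroup FY] [NormedSpace ℝ FY] [NormedAddCommGroup FW] [NormedSpace ℝ FW]

/-- `T : Y → W` is MS-Lipschitz `p`-summing (`q` is the conjugate of `p`), the free spaces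
of `Y` and `W` being realized as `FY`, `FW` via `δY`, `δW`.  Elements of `W^# = F(W)^*` are
encoded as elements of `Dual ℝ FW`, and `d_p^L` is the Chevet–Saphar norm computed in
`F(Y) ⊗ W^#`. -/
def MSLipPSumming (p q : ℝ) (δY : Y → FY) (δW : W → FW) (T : Y → W) : Prop :=
  ∃ K > 0, ∀ (k : ℕ) (x y : Fin k → Y) (f : Fin k → StrongDual ℝ FW),
    |∑ l, (f l (δW (T (x l))) - f l (δW (T (y l))))| ≤
      K * dpNorm p q (∑ l, (δY (x l) - δY (y l)) ⊗ₜ[ℝ] f l)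

/-- `T : Y → W` is MS-strongly Lipschitz `p`-summing (`q` is the conjugate of `p`). -/
def MSStronglyLipPSumming (p q : ℝ) (δY : Y → FY) (δW : W → FW) (T : Y → W) : Prop :=
  ∃ K > 0, ∀ (k : ℕ) (x y : Fin k → Y) (f : Fin k → StrongDual ℝ FW),
    |∑ l, (f l (δW (T (x l))) - f l (δW (T (y l))))| ≤
      K * gpNorm p q (∑ l, (δY (x l) - δY (y l)) ⊗ₜ[ℝ] f l)

/-- `T : Y → W` is MS-Lipschitz `p`-nuclear (`q` is the conjugate of `p`). -/
def MSLipPNuclear (p q : ℝ) (δY : Y → FY) (δW : W → FW) (T : Y → W) : Prop :=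
  ∃ K > 0, ∀ (k : ℕ) (x y : Fin k → Y) (f : Fin k → StrongDual ℝ FW),
    |∑ l, (f l (δW (T (x l))) - f l (δW (T (y l))))| ≤
      K * wpNorm p q (∑ l, (δY (x l) - δY (y l)) ⊗ₜ[ℝ] f l)

end

open Real Filter Topology

lemma le_of_forall_le_div_one_sub {L B : ℝ} (h : ∀ δ, 0 < δ → δ < 1 → L ≤ B / (1 - δ)) :
    L ≤ B := by
  have hlim : Tendsto (fun δ : ℝ => B / (1 - δ)) (𝓝[>] 0) (𝓝 B) := by
    have : ContinuousAt (fun δ : ℝ => B / (1 - δ)) 0 := by fun_prop (disch := norm_num)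
    simpa using this.tendsto.mono_left nhdsWithin_le_nhds
  refine ge_of_tendsto hlim ?_
  filter_upwards [Ioo_mem_nhdsGT zero_lt_one] with δ hδ using h δ hδ.1 hδ.2

lemma div_rpow_one_div_eq_rpow_one_div {p q : ℝ} (hpq : p.HolderConjugate q) {S : ℝ}
    (hS : 0 ≤ S) : S / S ^ (1 / q) = S ^ (1 / p) := by
  rcases hS.eq_or_lt with rfl | hS
  · simp [hpq.ne_zero]
  · rw [div_eq_iff (rpow_pos_of_pos hS _).ne', ← rpow_add hS, one_div, one_div,
      hpq.inv_add_inv_eq_one, rpow_one]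

section StrongLp

variable {E : Type*} [NormedAddCommGroup E] {m : ℕ} {p q : ℝ}

lemma strongLp_nonneg (p : ℝ) (x : Fin m → E) : 0 ≤ strongLp p x := by
  unfold strongLp; positivity

lemma strongLp_le_one {x : Fin m → E} (hp : 0 < p) (h : ∑ j, ‖x j‖ ^ p ≤ 1) :
    strongLp p x ≤ 1 :=
  rpow_le_one (by positivity) h (by positivity)

lemma strongLp_smul_of_abs_eq_one [NormedSpace ℝ E] {ε : Fin m → ℝ} (hε : ∀ j, |ε j| = 1)
    (x : Fin m → E) : strongLp p (fun j => ε j • x j) = strongLp p x := by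
  simp only [strongLp, norm_smul, Real.norm_eq_abs, hε, one_mul]

lemma strongLp_single_one (hq : 0 < q) (j : Fin m) : strongLp q (Pi.single j (1 : ℝ)) = 1 := by
  rw [strongLp, Fintype.sum_eq_single j fun i hi => by simp [hi, zero_rpow hq.ne']]
  simp

lemma sum_mul_le_strongLp_mul_strongLp (hpq : p.HolderConjugate q) (b c : Fin m → ℝ) :
    ∑ j, b j * c j ≤ strongLp p b * strongLp q c := by
  simpa [strongLp] using inner_le_Lp_mul_Lq Finset.univ b c hpq

lemma exists_strongLp_le_one_sum_mul_eq (hpq : p.HolderConjugate q) (c : Fin m → ℝ) :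
    ∃ b : Fin m → ℝ, strongLp q b ≤ 1 ∧ ∑ j, b j * c j = strongLp p c := by
  set S := ∑ j, |c j| ^ p
  have hS : 0 ≤ S := by positivity
  refine ⟨fun j => SignType.sign (c j) * |c j| ^ (p - 1) / S ^ (1 / q), ?_, ?_⟩
  · refine strongLp_le_one hpq.symm.pos ?_
    calc ∑ j, ‖SignType.sign (c j) * |c j| ^ (p - 1) / S ^ (1 / q)‖ ^ q
        ≤ ∑ j, (|c j| ^ (p - 1) / S ^ (1 / q)) ^ q := by
          refine sum_le_sum fun j _ => rpow_le_rpow (norm_nonneg _) ?_ hpq.symm.nonneg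
          rw [norm_div, norm_mul, Real.norm_of_nonneg (by positivity : (0:ℝ) ≤ |c j| ^ (p - 1)),
            Real.norm_of_nonneg (by positivity : (0:ℝ) ≤ S ^ (1 / q))]
          gcongr
          exact mul_le_of_le_one_left (by positivity) (by cases SignType.sign (c j) <;> simp)
      _ = ∑ j, |c j| ^ p / S := by
          congr 1 with j
          rw [div_rpow (by positivity) (by positivity), ← rpow_mul (abs_nonneg _),
            hpq.sub_one_mul_conj, one_div, rpow_inv_rpow hS hpq.symm.ne_zero]
      _ ≤ 1 := by rw [← sum_div]; exact div_self_le_one S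
  · have hbc (j : Fin m) :
        SignType.sign (c j) * |c j| ^ (p - 1) / S ^ (1 / q) * c j = |c j| ^ p / S ^ (1 / q) := by
      rw [div_mul_eq_mul_div, mul_right_comm, sign_mul_self, mul_comm,
        ← rpow_add_one' (abs_nonneg _) (by simpa using hpq.ne_zero), sub_add_cancel]
    simp only [sum_congr rfl fun j _ => hbc j, ← sum_div]
    rw [div_rpow_one_div_eq_rpow_one_div hpq hS]
    simp [S, strongLp]

lemma exists_finset_net_unitBall (hq : 1 ≤ q) {δ : ℝ} (hδ : 0 < δ) :
    ∃ N : Finset (Fin m → ℝ), (∀ j, Pi.single j 1 ∈ N) ∧ (∀ a ∈ N, strongLp q a ≤ 1) ∧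
      ∀ b, strongLp q b ≤ 1 → ∃ a ∈ N, strongLp q (b - a) ≤ δ := by
  have : Fact (1 ≤ ENNReal.ofReal q) := ⟨by simpa using hq⟩
  have hnorm (b : Fin m → ℝ) : ‖WithLp.toLp (ENNReal.ofReal q) b‖ = strongLp q b := by
    rw [PiLp.norm_eq_sum (by rw [ENNReal.toReal_ofReal (by linarith)]; linarith),
      ENNReal.toReal_ofReal (by linarith)]
    rfl
  obtain ⟨t, hts, ht, hcover⟩ := finite_cover_balls_of_compact
    (isCompact_closedBall (0 : PiLp (ENNReal.ofReal q) fun _ : Fin m => ℝ) 1) hδ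
  refine ⟨ht.toFinset.image WithLp.ofLp ∪ univ.image (fun j => Pi.single j 1),
    fun j => by simp, ?_, fun b hb => ?_⟩
  · simp only [mem_union, mem_image, Set.Finite.mem_toFinset, mem_univ, true_and]
    rintro a (⟨x, hx, rfl⟩ | ⟨j, rfl⟩)
    · simpa [hnorm] using hts hx
    · exact (strongLp_single_one (by linarith) j).le
  · have hb' : WithLp.toLp (ENNReal.ofReal q) b ∈ Metric.closedBall 0 1 := by
      simpa [hnorm] using hb
    obtain ⟨x, hx, hbx⟩ := Set.mem_iUnion₂.mp (hcover hb')
    refine ⟨x.ofLp, by simpa using Or.inl ⟨x, hx, rfl⟩, ?_⟩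
    rw [Metric.mem_ball, dist_eq_norm] at hbx
    simpa [← hnorm] using hbx.le

end StrongLp

section WeakLp

variable {E : Type*} [NormedAddCommGroup E] [NormedSpace ℝ E] {m : ℕ} {p q : ℝ}

lemma weakLp_bddAbove (hp : 0 ≤ p) (x : Fin m → E) :
    BddAbove {r : ℝ | ∃ φ : StrongDual ℝ E, ‖φ‖ ≤ 1 ∧ r = (∑ j, |φ (x j)| ^ p) ^ (1 / p)} := by
  refine ⟨strongLp p x, ?_⟩
  rintro r ⟨φ, hφ, rfl⟩
  have hφx (j : Fin m) : |φ (x j)| ≤ ‖x j‖ := by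
    simpa using φ.le_of_opNorm_le hφ (x j)
  unfold strongLp
  gcongr with j
  exact hφx j

lemma le_weakLp (hp : 0 ≤ p) (x : Fin m → E) {φ : StrongDual ℝ E} (hφ : ‖φ‖ ≤ 1) :
    strongLp p (fun j => φ (x j)) ≤ weakLp p x :=
  le_csSup (weakLp_bddAbove hp x) ⟨φ, hφ, rfl⟩

lemma weakLp_nonneg (hp : 0 ≤ p) (x : Fin m → E) : 0 ≤ weakLp p x :=
  (strongLp_nonneg p _).trans (le_weakLp hp x (φ := 0) (by simp))

lemma weakLp_le {x : Fin m → E} {B : ℝ}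
    (h : ∀ φ : StrongDual ℝ E, ‖φ‖ ≤ 1 → strongLp p (fun j => φ (x j)) ≤ B) :
    weakLp p x ≤ B :=
  csSup_le ⟨_, 0, by simp, rfl⟩ fun _ ⟨φ, hφ, hr⟩ => hr ▸ h φ hφ

lemma weakLp_inclusionInDoubleDual_le (hp : 0 ≤ p) (x : Fin m → E) :
    weakLp p (fun j => inclusionInDoubleDual ℝ E (x j)) ≤ weakLp p x := by
  refine weakLp_le fun ψ hψ => ?_
  have hψJ : ‖ψ.comp (inclusionInDoubleDual ℝ E)‖ ≤ 1 :=
    ContinuousLinearMap.opNorm_le_bound _ zero_le_one fun v =>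
      calc ‖ψ (inclusionInDoubleDual ℝ E v)‖
          ≤ ‖ψ‖ * ‖inclusionInDoubleDual ℝ E v‖ := ψ.le_opNorm _
        _ ≤ 1 * ‖v‖ := by gcongr; exact double_dual_bound ℝ E v
  have h := le_weakLp hp x hψJ
  simp only [ContinuousLinearMap.comp_apply] at h
  exact h

lemma norm_sum_smul_le_strongLp_mul_weakLp (hpq : p.HolderConjugate q) (b : Fin m → ℝ)
    (x : Fin m → E) : ‖∑ j, b j • x j‖ ≤ strongLp q b * weakLp p x := by
  obtain ⟨φ, hφ, hφx⟩ := exists_dual_vector'' ℝ (∑ j, b j • x j)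
  calc ‖∑ j, b j • x j‖ = ∑ j, b j * φ (x j) := by
        rw [RCLike.ofReal_real_eq_id, id] at hφx
        rw [← hφx, map_sum]; simp only [map_smul, smul_eq_mul]
    _ ≤ strongLp q b * strongLp p (fun j => φ (x j)) :=
      sum_mul_le_strongLp_mul_strongLp hpq.symm b _
    _ ≤ strongLp q b * weakLp p x := by
      gcongr
      · exact strongLp_nonneg q b
      · exact le_weakLp hpq.nonneg x hφ

lemma one_sub_mul_weakLp_le_norm (hpq : p.HolderConjugate q) {ι : Type*} [Fintype ι]
    {a : ι → Fin m → ℝ} {δ : ℝ} (hnet : ∀ b, strongLp q b ≤ 1 → ∃ i, strongLp q (b - a i) ≤ δ)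
    (x : Fin m → E) : (1 - δ) * weakLp p x ≤ ‖fun i => ∑ j, a i j • x j‖ := by
  suffices weakLp p x ≤ ‖fun i => ∑ j, a i j • x j‖ + δ * weakLp p x by linarith
  refine weakLp_le fun φ hφ => ?_
  obtain ⟨b, hb, hbφ⟩ := exists_strongLp_le_one_sum_mul_eq hpq fun j => φ (x j)
  obtain ⟨i, hi⟩ := hnet b hb
  have hsplit : ∑ j, b j • x j = ∑ j, a i j • x j + ∑ j, (b - a i) j • x j := by
    rw [← sum_add_distrib]
    simp [← add_smul]
  calc strongLp p (fun j => φ (x j)) = φ (∑ j, b j • x j) := by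
        simp [← hbφ, map_sum]
    _ ≤ ‖∑ j, b j • x j‖ := (le_abs_self _).trans <| by
        simpa only [one_mul, Real.norm_eq_abs] using φ.le_of_opNorm_le hφ _
    _ ≤ ‖∑ j, a i j • x j‖ + ‖∑ j, (b - a i) j • x j‖ := hsplit ▸ norm_add_le _ _
    _ ≤ ‖fun i => ∑ j, a i j • x j‖ + δ * weakLp p x := by
      gcongr
      · exact norm_le_pi_norm (fun i => ∑ j, a i j • x j) i
      · exact (norm_sum_smul_le_strongLp_mul_weakLp hpq _ x).trans
          (mul_le_mul_of_nonneg_right hi (weakLp_nonneg hpq.nonneg x))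

end WeakLp

section Functionals

variable {E : Type*} [NormedAddCommGroup E] [NormedSpace ℝ E] {m : ℕ} {p q : ℝ}

lemma exists_norm_le_one_lt_apply (f : StrongDual ℝ E) {r : ℝ} (hr : r < ‖f‖) :
    ∃ v, ‖v‖ ≤ 1 ∧ r < f v := by
  obtain ⟨v, hv, hrv⟩ := f.exists_lt_apply_of_lt_opNorm hr
  rcases le_total 0 (f v) with hfv | hfv
  · exact ⟨v, hv.le, by rwa [Real.norm_of_nonneg hfv] at hrv⟩
  · exact ⟨-v, by simpa using hv.le, by rwa [Real.norm_of_nonpos hfv, ← map_neg] at hrv⟩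

lemma apply_eq_sum_comp_single {ι : Type*} [Fintype ι] [DecidableEq ι]
    (η : StrongDual ℝ (ι → E)) (v : ι → E) :
    η v = ∑ i, η.comp (ContinuousLinearMap.single ℝ (fun _ => E) i) (v i) := by
  conv_lhs => rw [← univ_sum_single v]
  simp [map_sum]

lemma sum_norm_comp_single_le_opNorm {ι : Type*} [Fintype ι] [DecidableEq ι]
    (η : StrongDual ℝ (ι → E)) :
    ∑ i, ‖η.comp (ContinuousLinearMap.single ℝ (fun _ => E) i)‖ ≤ ‖η‖ := by
  refine le_of_forall_pos_le_add fun ε hε => ?_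
  set ε' := ε / (Fintype.card ι + 1)
  have hε' : 0 < ε' := by positivity
  choose v hv hlt using fun i =>
    exists_norm_le_one_lt_apply (η.comp (ContinuousLinearMap.single ℝ (fun _ => E) i))
      (sub_lt_self _ hε')
  have hcard : Fintype.card ι * ε' ≤ ε := by
    rw [mul_div_assoc']
    exact div_le_of_le_mul₀ (by positivity) hε.le (by linarith)
  have hηv : η v ≤ ‖η‖ := by
    simpa using (le_abs_self _).trans (η.le_of_opNorm_le le_rfl v |>.trans
      (mul_le_of_le_one_right (norm_nonneg η) ((pi_norm_le_iff_of_nonneg zero_le_one).mpr hv)))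
  have hsum : ∑ i, ‖η.comp (ContinuousLinearMap.single ℝ (fun _ => E) i)‖ - Fintype.card ι * ε'
      ≤ η v := by
    rw [apply_eq_sum_comp_single, ← nsmul_eq_mul, ← card_univ, ← sum_const, ← sum_sub_distrib]
    exact sum_le_sum fun i _ => (hlt i).le
  linarith

lemma exists_sum_norm_le_and_eq_sum_smul {ι : Type*} [Fintype ι] {a : ι → Fin m → ℝ}
    (hunit : ∀ j, Pi.single j 1 ∈ Set.range a) {V : Submodule ℝ E} (hV : Dense (V : Set E))
    {g : Fin m → StrongDual ℝ E} {C : ℝ} (hC : 0 ≤ C)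
    (hg : ∀ x : Fin m → E, (∀ j, x j ∈ V) →
      |∑ j, g j (x j)| ≤ C * ‖fun i => ∑ j, a i j • x j‖) :
    ∃ h : ι → StrongDual ℝ E, ∑ i, ‖h i‖ ≤ C ∧ ∀ j, g j = ∑ i, a i j • h i := by
  classical
  choose e he using hunit
  let Φ : (Fin m → E) →ₗ[ℝ] (ι → E) := LinearMap.pi fun i => ∑ j, a i j • LinearMap.proj j
  have hΦ (x : Fin m → E) (i : ι) : Φ x i = ∑ j, a i j • x j := by simp [Φ]
  let R : Submodule ℝ (ι → E) := (Submodule.pi Set.univ fun _ => V).map Φ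
  let G : StrongDual ℝ (ι → E) := ∑ j, (g j).comp (ContinuousLinearMap.proj (e j))
  have hGΦ (x : Fin m → E) : G (Φ x) = ∑ j, g j (x j) := by
    simp [G, hΦ, he, Pi.single_apply]
  have hGR : ‖G.comp R.subtypeL‖ ≤ C := by
    refine ContinuousLinearMap.opNorm_le_bound _ hC ?_
    rintro ⟨_, x, hx, rfl⟩
    have hΦx : (fun i => ∑ j, a i j • x j) = Φ x := funext fun i => (hΦ x i).symm
    simpa [hGΦ, hΦx] using hg x fun j => hx j trivial
  obtain ⟨η, hηG, hη⟩ := exists_extension_norm_eq R (G.comp R.subtypeL)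
  let h (i : ι) : StrongDual ℝ E := η.comp (ContinuousLinearMap.single ℝ (fun _ => E) i)
  refine ⟨h, (sum_norm_comp_single_le_opNorm η).trans (hη ▸ hGR), fun j => ?_⟩
  refine ContinuousLinearMap.ext_on (by rwa [Submodule.span_eq]) fun w hw => ?_
  have hmem : Φ (Pi.single j w) ∈ R := by
    refine ⟨Pi.single j w, fun j' _ => ?_, rfl⟩
    rcases eq_or_ne j' j with rfl | hj
    · simpa using hw
    · simp [hj, V.zero_mem]
  calc g j w = G (Φ (Pi.single j w)) := by
        rw [hGΦ, Fintype.sum_eq_single j fun i hi => by simp [hi], Pi.single_eq_same]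
    _ = η (Φ (Pi.single j w)) := (hηG ⟨_, hmem⟩).symm
    _ = (∑ i, a i j • h i) w := by
        rw [apply_eq_sum_comp_single η, _root_.sum_apply]
        refine sum_congr rfl fun i _ => ?_
        rw [hΦ, Fintype.sum_eq_single j fun j' hj' => by simp [hj'], Pi.single_eq_same,
          map_smul]
        rfl

lemma sum_apply_le_of_abs_sum_le_weakLp (hpq : p.HolderConjugate q) {V : Submodule ℝ E}
    (hV : Dense (V : Set E)) {g : Fin m → StrongDual ℝ E} {C : ℝ} (hC : 0 ≤ C)
    (hg : ∀ x : Fin m → E, (∀ j, x j ∈ V) → |∑ j, g j (x j)| ≤ C * weakLp p x)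
    (φ : Fin m → StrongDual ℝ (StrongDual ℝ E)) :
    ∑ j, φ j (g j) ≤ C * weakLp p φ := by
  refine le_of_forall_le_div_one_sub fun δ hδ hδ1 => ?_
  obtain ⟨N, hNunit, hNball, hNnet⟩ := exists_finset_net_unitBall (m := m) hpq.symm.lt.le hδ
  have hCδ : 0 ≤ C / (1 - δ) := div_nonneg hC (by linarith)
  obtain ⟨h, hhC, hgh⟩ := exists_sum_norm_le_and_eq_sum_smul (a := ((↑) : N → Fin m → ℝ))
    (fun j => ⟨⟨_, hNunit j⟩, rfl⟩) hV hCδ fun x hx => by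
      refine (hg x hx).trans ?_
      rw [div_mul_eq_mul_div, le_div_iff₀ (by linarith), mul_assoc]
      refine mul_le_mul_of_nonneg_left ?_ hC
      rw [mul_comm]
      exact one_sub_mul_weakLp_le_norm hpq (fun b hb => by simpa using hNnet b hb) x
  have hφh (i : N) : (∑ j, (i : Fin m → ℝ) j • φ j) (h i) ≤ weakLp p φ * ‖h i‖ :=
    calc _ ≤ ‖∑ j, (i : Fin m → ℝ) j • φ j‖ * ‖h i‖ :=
          (le_abs_self _).trans ((∑ j, (i : Fin m → ℝ) j • φ j).le_opNorm (h i))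
      _ ≤ weakLp p φ * ‖h i‖ := by
        gcongr
        simpa using (norm_sum_smul_le_strongLp_mul_weakLp hpq _ φ).trans
          (mul_le_of_le_one_left (weakLp_nonneg hpq.nonneg φ) (hNball i i.2))
  calc ∑ j, φ j (g j) = ∑ i : N, (∑ j, (i : Fin m → ℝ) j • φ j) (h i) := by
        simp only [hgh, map_sum, map_smul, _root_.sum_apply, _root_.smul_apply, smul_eq_mul]
        exact sum_comm
    _ ≤ ∑ i : N, weakLp p φ * ‖h i‖ := sum_le_sum fun i _ => hφh i
    _ ≤ weakLp p φ * (C / (1 - δ)) := by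
        rw [← mul_sum]; exact mul_le_mul_of_nonneg_left hhC (weakLp_nonneg hpq.nonneg φ)
    _ = C * weakLp p φ / (1 - δ) := by ring

end Functionals

section Pairing

variable {E G : Type*} [NormedAddCommGroup E] [NormedSpace ℝ E] [NormedAddCommGroup G]
  [NormedSpace ℝ G] {m : ℕ} {p q : ℝ}

def tensorPairing (u : G →L[ℝ] StrongDual ℝ E) : E ⊗[ℝ] G →ₗ[ℝ] ℝ :=
  TensorProduct.lift (ContinuousLinearMap.coeLM ℝ ∘ₗ u.toLinearMap).flip

@[simp]
lemma tensorPairing_tmul (u : G →L[ℝ] StrongDual ℝ E) (x : E) (g : G) :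
    tensorPairing u (x ⊗ₜ g) = u g x :=
  rfl

lemma dpNorm_sum_tmul_le (hp : 0 ≤ p) (x : Fin m → E) (g : Fin m → G) :
    dpNorm p q (∑ j, x j ⊗ₜ[ℝ] g j) ≤ weakLp p x * strongLp q g :=
  csInf_le ⟨0, fun _ ⟨_, x', g', _, hr⟩ =>
    hr ▸ mul_nonneg (weakLp_nonneg hp x') (strongLp_nonneg q g')⟩ ⟨m, x, g, rfl, rfl⟩

lemma exists_abs_tensorPairing_le_dpNorm (hp : 0 ≤ p) {u : G →L[ℝ] StrongDual ℝ E}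
    (hu : IsStronglyPSumming q p u) :
    ∃ K > 0, ∀ z : E ⊗[ℝ] G, |tensorPairing u z| ≤ K * dpNorm p q z := by
  obtain ⟨K, hK, hu⟩ := hu
  refine ⟨K, hK, fun z => ?_⟩
  rw [mul_comm, ← div_le_iff₀ hK]
  obtain ⟨k, x, g, hz⟩ := TensorProduct.exists_sum_tmul_eq z
  refine le_csInf ⟨_, k, x, g, hz, rfl⟩ fun r ⟨m, x, g, hz, hr⟩ => ?_
  rw [div_le_iff₀ hK, hr, hz, map_sum]
  calc |∑ j, tensorPairing u (x j ⊗ₜ g j)|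
      ≤ ∑ j, |inclusionInDoubleDual ℝ E (x j) (u (g j))| := by
        simpa using abs_sum_le_sum_abs _ _
    _ ≤ K * strongLp q g * weakLp p fun j => inclusionInDoubleDual ℝ E (x j) := hu m g _
    _ ≤ K * strongLp q g * weakLp p x := by
        gcongr
        · exact mul_nonneg hK.le (strongLp_nonneg q g)
        · exact weakLp_inclusionInDoubleDual_le hp x
    _ = weakLp p x * strongLp q g * K := by ring

lemma isStronglyPSumming_of_exists_abs_sum_le (hpq : p.HolderConjugate q) {V : Submodule ℝ E}
    (hV : Dense (V : Set E)) {u : G →L[ℝ] StrongDual ℝ E}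
    (hu : ∃ K > 0, ∀ (m : ℕ) (x : Fin m → E) (g : Fin m → G), (∀ j, x j ∈ V) →
      |∑ j, u (g j) (x j)| ≤ K * (weakLp p x * strongLp q g)) :
    IsStronglyPSumming q p u := by
  obtain ⟨K, hK, hu⟩ := hu
  refine ⟨K, hK, fun m g φ => ?_⟩
  set ε : Fin m → ℝ := fun j => if 0 ≤ φ j (u (g j)) then 1 else -1
  have hε (j : Fin m) : |ε j| = 1 := by unfold ε; split_ifs <;> simp
  have hεφ (j : Fin m) : |φ j (u (g j))| = φ j (u (ε j • g j)) := by
    unfold ε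
    split_ifs with h
    · simp [abs_of_nonneg h]
    · simp [abs_of_neg (not_le.mp h)]
  calc ∑ j, |φ j (u (g j))| = ∑ j, φ j (u (ε j • g j)) := sum_congr rfl fun j _ => hεφ j
    _ ≤ K * strongLp q (fun j => ε j • g j) * weakLp p φ :=
        sum_apply_le_of_abs_sum_le_weakLp hpq hV (mul_nonneg hK.le (strongLp_nonneg q _))
          (fun x hx => by
            simpa only [mul_comm, mul_left_comm] using hu m x (fun j => ε j • g j) hx) φ
    _ = K * strongLp q g * weakLp p φ := by rw [strongLp_smul_of_abs_eq_one hε]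

end Pairing

lemma exists_sum_tmul_eq_sum_sub_tmul {Y M G : Type*} [AddCommGroup M] [Module ℝ M]
    [AddCommGroup G] [Module ℝ G] {δ : Y → M} {y₀ : Y} (h₀ : δ y₀ = 0) {m : ℕ}
    {x : Fin m → M} (hx : ∀ j, x j ∈ Submodule.span ℝ (Set.range δ)) (g : Fin m → G) :
    ∃ (k : ℕ) (y y' : Fin k → Y) (g' : Fin k → G),
      ∑ j, x j ⊗ₜ[ℝ] g j = ∑ l, (δ (y l) - δ (y' l)) ⊗ₜ[ℝ] g' l := by
  have hrep (j : Fin m) : ∃ (n : ℕ) (c : Fin n → ℝ) (y : Fin n → Y), ∑ i, c i • δ (y i) = x j := by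
    obtain ⟨n, c, y, hy⟩ := Submodule.mem_span_set'.mp (hx j)
    choose y' hy' using fun i => (y i).2
    exact ⟨n, c, y', by simpa [hy'] using hy⟩
  choose n c y hy using hrep
  let e := (Fintype.equivFin (Σ j, Fin (n j))).symm
  refine ⟨_, fun l => y (e l).1 (e l).2, fun _ => y₀, fun l => c (e l).1 (e l).2 • g (e l).1, ?_⟩
  simp only [h₀, sub_zero]
  rw [Fintype.sum_equiv e _ (fun s => δ (y s.1 s.2) ⊗ₜ[ℝ] (c s.1 s.2 • g s.1)) fun _ => rfl,
    Fintype.sum_sigma]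
  simp [← hy, TensorProduct.sum_tmul, TensorProduct.smul_tmul]

section FreeSpace

variable {Y W FY FW : Type*} [NormedAddCommGroup FY] [NormedSpace ℝ FY] [NormedAddCommGroup FW]
  [NormedSpace ℝ FW] {δY : Y → FY} {δW : W → FW} {T : Y → W}
  {Ts : StrongDual ℝ FW →L[ℝ] StrongDual ℝ FY} {p q : ℝ}

lemma sum_sub_eq_tensorPairing (hTs : ∀ f x, Ts f (δY x) = f (δW (T x))) {k : ℕ}
    (x y : Fin k → Y) (f : Fin k → StrongDual ℝ FW) :
    ∑ l, (f l (δW (T (x l))) - f l (δW (T (y l)))) =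
      tensorPairing Ts (∑ l, (δY (x l) - δY (y l)) ⊗ₜ[ℝ] f l) := by
  simp [map_sum, hTs]

lemma exists_abs_sum_le_of_msLipPSumming [MetricSpace Y] [MetricSpace W] (hp : 0 ≤ p) {y₀ : Y}
    (h₀ : δY y₀ = 0) (hTs : ∀ f x, Ts f (δY x) = f (δW (T x)))
    (hT : MSLipPSumming p q δY δW T) :
    ∃ K > 0, ∀ (m : ℕ) (x : Fin m → FY) (f : Fin m → StrongDual ℝ FW),
      (∀ j, x j ∈ Submodule.span ℝ (Set.range δY)) →
        |∑ j, Ts (f j) (x j)| ≤ K * (weakLp p x * strongLp q f) := by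
  obtain ⟨K, hK, hT⟩ := hT
  refine ⟨K, hK, fun m x f hx => ?_⟩
  obtain ⟨k, y, y', f', hrep⟩ := exists_sum_tmul_eq_sum_sub_tmul h₀ hx f
  calc |∑ j, Ts (f j) (x j)| = |tensorPairing Ts (∑ j, x j ⊗ₜ[ℝ] f j)| := by simp [map_sum]
    _ ≤ K * dpNorm p q (∑ j, x j ⊗ₜ[ℝ] f j) := by
        rw [hrep, ← sum_sub_eq_tensorPairing hTs]; exact hT k y y' f'
    _ ≤ K * (weakLp p x * strongLp q f) := by gcongr; exact dpNorm_sum_tmul_le hp x f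

end FreeSpace

theorem msLipPSumming_iff_adjoint_stronglySumming_general
    {Y W FY FW : Type*} [MetricSpace Y] [Inhabited Y] [MetricSpace W]
    [NormedAddCommGroup FY] [NormedSpace ℝ FY] [CompleteSpace FY]
    [NormedAddCommGroup FW] [NormedSpace ℝ FW]
    {δY : Y → FY} {δW : W → FW}
    (hFY : IsFreeSpace Y default FY δY)
    {p q : ℝ} (hpq : p.HolderConjugate q)
    (T : Y → W)
    (Ts : StrongDual ℝ FW →L[ℝ] StrongDual ℝ FY)
    (hTs : ∀ (f : StrongDual ℝ FW) (x : Y), Ts f (δY x) = f (δW (T x))) :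
    MSLipPSumming p q δY δW T ↔ IsStronglyPSumming q p Ts := by
  constructor
  · intro hT
    exact isStronglyPSumming_of_exists_abs_sum_le hpq
      (Submodule.dense_iff_topologicalClosure_eq_top.mpr hFY.dense_span)
      (exists_abs_sum_le_of_msLipPSumming hpq.nonneg hFY.map_base hTs hT)
  · intro hTs_summing
    obtain ⟨K, hK, hpair⟩ := exists_abs_tensorPairing_le_dpNorm hpq.nonneg hTs_summing
    exact ⟨K, hK, fun k x y f => sum_sub_eq_tensorPairing hTs x y f ▸ hpair _⟩

/-- Corollary 2.6: `T` is MS-Lipschitz `p`-summing iff the Lipschitz adjoint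
`T^# : W^# → Y^#` is strongly `p*`-summing.  Here `W^#`, `Y^#` are realized as the duals of the
free spaces and `T^#` as the adjoint `Ts` of the linearization. -/
theorem msLipPSumming_iff_adjoint_stronglySumming
    {Y W FY FW : Type*} [MetricSpace Y] [Inhabited Y] [MetricSpace W] [Inhabited W]
    [NormedAddCommGroup FY] [NormedSpace ℝ FY] [CompleteSpace FY]
    [NormedAddCommGroup FW] [NormedSpace ℝ FW] [CompleteSpace FW]
    {δY : Y → FY} {δW : W → FW}
    (hFY : IsFreeSpace Y default FY δY) (hFW : IsFreeSpace W default FW δW)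
    {p q : ℝ} (hpq : p.HolderConjugate q)
    (T : Y → W) (hTlip : ∃ K, LipschitzWith K T) (hT0 : T default = default)
    (Ts : StrongDual ℝ FW →L[ℝ] StrongDual ℝ FY)
    (hTs : ∀ (f : StrongDual ℝ FW) (x : Y), Ts f (δY x) = f (δW (T x))) :
    MSLipPSumming p q δY δW T ↔ IsStronglyPSumming q p Ts :=
  msLipPSumming_iff_adjoint_stronglySumming_general hFY hpq T Ts hTs
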